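/- arXiv:2406.03696 — 6 statements merged into one kernel-verified Lean document; each statement's English description precedes it below -/
import Mathlib

section
/- The sample cross-covariance matrix Z = (1/n)X̃ᵀX of the modified features with the original features is a symmetric matrix (hence all its eigenvalues are real), and moreover Range(Z) ⊆ Range(X̃ᵀ) ⊆ Range(Xᵀ), where Range(·) denotes the column space of a matrix. -/
/-!
Fix an order `τ` and write `F_j = I - α W_{τ(j)}`. Telescoping gives
`I - α ∑_k W_{τ(k)} F_{k+1} ⋯ F_{B-1} = F_0 ⋯ F_{B-1}`, and with it an induction on `B` proves
`∑_k F_0 ⋯ F_{k-1} W_{τ(k)} = ∑_k W_{τ(k)} F_{k+1} ⋯ F_{B-1}` (for `α ≠ 0` both sides are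
`α⁻¹ (I - F_0 ⋯ F_{B-1})`). As the `W_b` are symmetric, the left side is
`∑_b (∏_{j < τ⁻¹(b)})ᵀ W_b`, while the transpose of the right side is the same sum for the
reversed order `τ ∘ rev`. Averaging over `S_B`, `∑_b Π_bᵀ W_b` is therefore symmetric for every
symmetric family `W_b`; `Z = (1/n) ∑_b Π_bᵀ X_bᵀ X_b` is such a sum for the family `X_bᵀ X_b`
once the factor `B/n` of `W_b` is absorbed into `α`.

For the ranges, `Z = X̃ᵀ (X / n)`, and the row space of `X` is invariant under every `W_b`, hence
under every `Π_bᵀ`; the rows of `X̃_b = X_b Π_b` are the rows of `X_b` moved by `Π_bᵀ`.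
-/

open Matrix Finset

noncomputable section

namespace MiniBatchGD

variable {p B m : ℕ}

/-- The product `∏_{j < τ⁻¹(b)} (I - α W_{τ(j)})`, with factors ordered by decreasing
position `j` (the factor with largest `j` leftmost); the empty product is `I`. -/
def prodBefore (α : ℝ) (W : Fin B → Matrix (Fin p) (Fin p) ℝ)
    (τ : Equiv.Perm (Fin B)) (b : Fin B) : Matrix (Fin p) (Fin p) ℝ :=
  ((((List.finRange B).filter (fun j => j < τ.symm b)).reverse).map
      (fun j => (1 : Matrix (Fin p) (Fin p) ℝ) - α • W (τ j))).prod

/-- The product `∏_{j > τ⁻¹(b)} (I - α W_{τ(j)})`, with factors ordered by decreasing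
position `j`; the empty product is `I`. -/
def prodAfter (α : ℝ) (W : Fin B → Matrix (Fin p) (Fin p) ℝ)
    (τ : Equiv.Perm (Fin B)) (b : Fin B) : Matrix (Fin p) (Fin p) ℝ :=
  ((((List.finRange B).filter (fun j => τ.symm b < j)).reverse).map
      (fun j => (1 : Matrix (Fin p) (Fin p) ℝ) - α • W (τ j))).prod

/-- The whole-epoch product `∏_{b=1}^{B} (I - α W_{τ(b)})`, factors ordered by
decreasing position. -/
def prodAll (α : ℝ) (W : Fin B → Matrix (Fin p) (Fin p) ℝ)
    (τ : Equiv.Perm (Fin B)) : Matrix (Fin p) (Fin p) ℝ :=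
  (((List.finRange B).reverse).map
      (fun j => (1 : Matrix (Fin p) (Fin p) ℝ) - α • W (τ j))).prod

/-- `Π_b := (1/B!) ∑_{τ ∈ S_B} ∏_{j < τ⁻¹(b)} (I - α W_{τ(j)})`. -/
def Pib (α : ℝ) (W : Fin B → Matrix (Fin p) (Fin p) ℝ) (b : Fin B) :
    Matrix (Fin p) (Fin p) ℝ :=
  ((B.factorial : ℝ))⁻¹ • ∑ τ : Equiv.Perm (Fin B), prodBefore α W τ b

/-- The `b`-th mini-batch of rows of `X`. -/
def batch (X : Matrix (Fin B × Fin m) (Fin p) ℝ) (b : Fin B) : Matrix (Fin m) (Fin p) ℝ :=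
  Matrix.of fun i j => X (b, i) j

/-- The sample covariance `W_b = (B/n) X_bᵀ X_b` of the `b`-th mini-batch (`n = B m`). -/
def Wb (X : Matrix (Fin B × Fin m) (Fin p) ℝ) (b : Fin B) : Matrix (Fin p) (Fin p) ℝ :=
  ((B : ℝ) / ((B * m : ℕ) : ℝ)) • ((batch X b)ᵀ * batch X b)

/-- The modified feature matrix `X̃`, whose `b`-th block of rows is `X̃_b = X_b Π_b`. -/
def Xtilde (α : ℝ) (X : Matrix (Fin B × Fin m) (Fin p) ℝ) :
    Matrix (Fin B × Fin m) (Fin p) ℝ :=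
  Matrix.of fun bi j => (batch X bi.1 * Pib α (Wb X) bi.1) bi.2 j

/-- The sample cross-covariance matrix `Z = (1/n) X̃ᵀ X`. -/
def Zmat (α : ℝ) (X : Matrix (Fin B × Fin m) (Fin p) ℝ) : Matrix (Fin p) (Fin p) ℝ :=
  (((B * m : ℕ) : ℝ))⁻¹ • ((Xtilde α X)ᵀ * X)

/-- One mini-batch gradient step with step size `α` on batch `b`:
`β ← β - (Bα/n) X_bᵀ (X_b β - y_b)`. -/
def step (α : ℝ) (X : Matrix (Fin B × Fin m) (Fin p) ℝ) (y : Fin B × Fin m → ℝ)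
    (b : Fin B) (β : Fin p → ℝ) : Fin p → ℝ :=
  β - ((B : ℝ) * α / ((B * m : ℕ) : ℝ)) •
    ((batch X b)ᵀ *ᵥ (batch X b *ᵥ β - fun i => y (b, i)))

/-- One epoch of mini-batch gradient descent using the mini-batches in the order
given by the permutation `τ`. -/
def epoch (α : ℝ) (X : Matrix (Fin B × Fin m) (Fin p) ℝ) (y : Fin B × Fin m → ℝ)
    (τ : Equiv.Perm (Fin B)) (β : Fin p → ℝ) : Fin p → ℝ :=
  (List.finRange B).foldl (fun β j => step α X y (τ j) β) β

/-- The mean iterate `β̄_k` of mini-batch gradient descent with random reshuffling: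
since each epoch map is affine in `β` and the permutations of distinct epochs are
independent and uniform, the mean iterate satisfies
`β̄_k = (1/B!) ∑_{τ ∈ S_B} epoch_τ (β̄_{k-1})`. -/
def meanIter (α : ℝ) (X : Matrix (Fin B × Fin m) (Fin p) ℝ) (y : Fin B × Fin m → ℝ)
    (β₀ : Fin p → ℝ) : ℕ → Fin p → ℝ
  | 0 => β₀
  | k + 1 => ((B.factorial : ℝ))⁻¹ •
      ∑ τ : Equiv.Perm (Fin B), epoch α X y τ (meanIter α X y β₀ k)

/-- `Ad` is the Moore–Penrose pseudoinverse of `A`. -/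
def IsMoorePenrose {n₁ n₂ : Type*} [Fintype n₁] [Fintype n₂]
    (A : Matrix n₁ n₂ ℝ) (Ad : Matrix n₂ n₁ ℝ) : Prop :=
  A * Ad * A = A ∧ Ad * A * Ad = Ad ∧ (A * Ad)ᵀ = A * Ad ∧ (Ad * A)ᵀ = Ad * A

end MiniBatchGD

open MiniBatchGD

section FinRangeFilter

variable {n : ℕ}

theorem List.filter_finRange_succ_lt_succ (k : Fin n) :
    (List.finRange (n + 1)).filter (· < k.succ) =
      0 :: ((List.finRange n).filter (· < k)).map Fin.succ := by
  simp [List.finRange_succ, List.filter_map, Function.comp_def]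

theorem List.filter_finRange_succ_zero_lt :
    (List.finRange (n + 1)).filter (0 < ·) = (List.finRange n).map Fin.succ := by
  simp [List.finRange_succ, List.filter_map, Function.comp_def, Fin.succ_pos]

theorem List.filter_finRange_succ_succ_lt (k : Fin n) :
    (List.finRange (n + 1)).filter (k.succ < ·) =
      ((List.finRange n).filter (k < ·)).map Fin.succ := by
  simp [List.finRange_succ, List.filter_map, Function.comp_def]

theorem List.reverse_filter_finRange_gt (k : Fin n) :
    ((List.finRange n).filter (k < ·)).reverse =
      ((List.finRange n).filter (· < k.rev)).map Fin.rev := by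
  rw [← List.filter_reverse, List.finRange_reverse, List.filter_map]
  simp [Function.comp_def, Fin.lt_rev_iff]

end FinRangeFilter

section Telescoping

variable {𝕜 R : Type*} [CommRing 𝕜] [Ring R] [Algebra 𝕜 R]

theorem one_sub_smul_sum_mul_prod_filter_gt {n : ℕ} (α : 𝕜) (w : Fin n → R) :
    1 - α • ∑ k, w k * (((List.finRange n).filter (k < ·)).map fun j => 1 - α • w j).prod =
      ((List.finRange n).map fun j => 1 - α • w j).prod := by
  induction n with
  | zero => simp
  | succ n ih =>
    have ih' := ih (fun j => w j.succ)
    beta_reduce at ih'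
    simp only [Fin.sum_univ_succ, List.filter_finRange_succ_zero_lt,
      List.filter_finRange_succ_succ_lt]
    simp only [List.finRange_succ, List.map_cons, List.prod_cons, List.map_map,
      Function.comp_def]
    rw [← ih', smul_add, sub_mul, one_mul, smul_mul_assoc]
    abel

theorem sum_prod_filter_lt_mul_eq_sum_mul_prod_filter_gt {n : ℕ} (α : 𝕜) (w : Fin n → R) :
    ∑ k, (((List.finRange n).filter (· < k)).map fun j => 1 - α • w j).prod * w k =
      ∑ k, w k * (((List.finRange n).filter (k < ·)).map fun j => 1 - α • w j).prod := by
  induction n with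
  | zero => simp
  | succ n ih =>
    have ih' := ih (fun j => w j.succ)
    have tele := one_sub_smul_sum_mul_prod_filter_gt α (fun j => w j.succ)
    beta_reduce at ih' tele
    simp only [Fin.sum_univ_succ, Fin.not_lt_zero, decide_false, List.filter_false,
      List.filter_finRange_succ_zero_lt, List.filter_finRange_succ_lt_succ,
      List.filter_finRange_succ_succ_lt, List.map_cons, List.map_map, List.prod_cons,
      List.map_nil, List.prod_nil, one_mul, mul_assoc, ← Finset.mul_sum, Function.comp_def]
    rw [ih', ← tele, sub_mul, one_mul, mul_sub, mul_one, smul_mul_assoc, mul_smul_comm]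
    abel

end Telescoping

section MatrixLemmas

variable {R n : Type*} [CommSemiring R] [Fintype n] [DecidableEq n]

def Submodule.matrixStabilizer (V : Submodule R (n → R)) : Subalgebra R (Matrix n n R) where
  carrier := {M | ∀ x ∈ V, M *ᵥ x ∈ V}
  mul_mem' hM hN x hx := by
    rw [← mulVec_mulVec]
    exact hM _ (hN x hx)
  add_mem' hM hN x hx := by
    rw [add_mulVec]
    exact V.add_mem (hM x hx) (hN x hx)
  algebraMap_mem' r x hx := by
    rw [Algebra.algebraMap_eq_smul_one, smul_mulVec, one_mulVec]
    exact V.smul_mem r hx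

theorem Submodule.transpose_mul_mem_matrixStabilizer {ι : Type*} [Fintype ι]
    {V : Submodule R (n → R)} {A : Matrix ι n R} (hA : ∀ i, A i ∈ V) (C : Matrix ι n R) :
    Aᵀ * C ∈ V.matrixStabilizer := by
  intro x _
  rw [← mulVec_mulVec]
  have : Aᵀ *ᵥ (C *ᵥ x) ∈ span R (Set.range A.row) := by
    rw [← col_transpose, ← range_mulVecLin]
    exact LinearMap.mem_range_self _ _
  exact span_le.2 (Set.range_subset_iff.2 hA) this

theorem Matrix.transpose_prod_map_reverse {ι : Type*} {f : ι → Matrix n n R}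
    (hf : ∀ i, (f i).IsSymm) (l : List ι) : ((l.reverse.map f).prod)ᵀ = (l.map f).prod := by
  rw [transpose_list_prod, List.map_reverse, List.map_reverse, List.reverse_reverse,
    List.map_map]
  exact congrArg List.prod (List.map_congr_left fun i _ => hf i)

end MatrixLemmas

namespace MiniBatchGD

section Products

variable {p B : ℕ} (α : ℝ) {W : Fin B → Matrix (Fin p) (Fin p) ℝ}

theorem transpose_prodBefore (hW : ∀ b, (W b).IsSymm) (τ : Equiv.Perm (Fin B)) (b : Fin B) :
    (prodBefore α W τ b)ᵀ =
      (((List.finRange B).filter (· < τ.symm b)).map fun j => 1 - α • W (τ j)).prod :=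
  transpose_prod_map_reverse (fun _ => isSymm_one.sub ((hW _).smul α)) _

theorem transpose_prodAfter (hW : ∀ b, (W b).IsSymm) (τ : Equiv.Perm (Fin B)) (b : Fin B) :
    (prodAfter α W τ b)ᵀ =
      (((List.finRange B).filter (τ.symm b < ·)).map fun j => 1 - α • W (τ j)).prod :=
  transpose_prod_map_reverse (fun _ => isSymm_one.sub ((hW _).smul α)) _

theorem prodAfter_eq_transpose_prodBefore_mul_revPerm (hW : ∀ b, (W b).IsSymm)
    (τ : Equiv.Perm (Fin B)) (b : Fin B) :
    prodAfter α W τ b = (prodBefore α W (τ * Fin.revPerm) b)ᵀ := by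
  rw [transpose_prodBefore α hW]
  simp [prodAfter, List.reverse_filter_finRange_gt, Function.comp_def,
    Equiv.Perm.mul_def]

theorem sum_transpose_prodBefore_mul_eq_sum_mul_transpose_prodAfter
    (hW : ∀ b, (W b).IsSymm) (τ : Equiv.Perm (Fin B)) :
    ∑ b, (prodBefore α W τ b)ᵀ * W b = ∑ b, W b * (prodAfter α W τ b)ᵀ := by
  rw [← Equiv.sum_comp τ, ← Equiv.sum_comp τ (fun b => W b * _)]
  simp only [transpose_prodBefore α hW, transpose_prodAfter α hW, Equiv.symm_apply_apply]
  exact sum_prod_filter_lt_mul_eq_sum_mul_prod_filter_gt α (fun k => W (τ k))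

theorem transpose_sum_transpose_prodBefore_mul (hW : ∀ b, (W b).IsSymm)
    (τ : Equiv.Perm (Fin B)) :
    (∑ b, (prodBefore α W τ b)ᵀ * W b)ᵀ =
      ∑ b, (prodBefore α W (τ * Fin.revPerm) b)ᵀ * W b := by
  simp [sum_transpose_prodBefore_mul_eq_sum_mul_transpose_prodAfter α hW, transpose_sum,
    transpose_mul, (hW _).eq, prodAfter_eq_transpose_prodBefore_mul_revPerm α hW]

theorem isSymm_sum_transpose_Pib_mul (hW : ∀ b, (W b).IsSymm) :
    (∑ b, (Pib α W b)ᵀ * W b).IsSymm := by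
  have hsum : ∑ b, (Pib α W b)ᵀ * W b =
      ((B.factorial : ℝ))⁻¹ • ∑ τ, ∑ b, (prodBefore α W τ b)ᵀ * W b := by
    simp only [Pib, transpose_smul, transpose_sum, smul_mul, Finset.sum_mul,
      ← Finset.smul_sum]
    rw [Finset.sum_comm]
  rw [hsum]
  refine IsSymm.smul ?_ _
  rw [IsSymm, transpose_sum]
  simp_rw [transpose_sum_transpose_prodBefore_mul α hW]
  exact Equiv.sum_comp (Equiv.mulRight Fin.revPerm)
    (fun τ => ∑ b, (prodBefore α W τ b)ᵀ * W b)

theorem Pib_smul (c : ℝ) (b : Fin B) : Pib α (fun b => c • W b) b = Pib (α * c) W b := by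
  simp [Pib, prodBefore, smul_smul]

theorem transpose_Pib_mem_matrixStabilizer {V : Submodule ℝ (Fin p → ℝ)}
    (hW : ∀ b, (W b).IsSymm) (hV : ∀ b, W b ∈ V.matrixStabilizer) (b : Fin B) :
    (Pib α W b)ᵀ ∈ V.matrixStabilizer := by
  rw [Pib, transpose_smul, transpose_sum]
  refine Subalgebra.smul_mem _ (Subalgebra.sum_mem _ fun τ _ => ?_) _
  rw [transpose_prodBefore α hW]
  refine Subalgebra.list_prod_mem _ fun M hM => ?_
  obtain ⟨j, -, rfl⟩ := List.mem_map.1 hM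
  exact Subalgebra.sub_mem _ (Subalgebra.one_mem _) (Subalgebra.smul_mem _ (hV _) α)

end Products

variable {p B m : ℕ}

theorem transpose_mul_eq_sum_batch (Y X : Matrix (Fin B × Fin m) (Fin p) ℝ) :
    Yᵀ * X = ∑ b, (batch Y b)ᵀ * batch X b := by
  ext i j
  simp [mul_apply, Matrix.sum_apply, batch, Fintype.sum_prod_type]

theorem batch_Xtilde (α : ℝ) (X : Matrix (Fin B × Fin m) (Fin p) ℝ) (b : Fin B) :
    batch (Xtilde α X) b = batch X b * Pib α (Wb X) b :=
  rfl

theorem transpose_Xtilde_mul (α : ℝ) (X : Matrix (Fin B × Fin m) (Fin p) ℝ) :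
    (Xtilde α X)ᵀ * X = ∑ b, (Pib α (Wb X) b)ᵀ * ((batch X b)ᵀ * batch X b) := by
  simp only [transpose_mul_eq_sum_batch, batch_Xtilde, transpose_mul, Matrix.mul_assoc]

theorem isSymm_transpose_batch_mul_batch (X : Matrix (Fin B × Fin m) (Fin p) ℝ) (b : Fin B) :
    ((batch X b)ᵀ * batch X b).IsSymm := by
  simp [IsSymm, transpose_mul]

theorem isSymm_Zmat (α : ℝ) (X : Matrix (Fin B × Fin m) (Fin p) ℝ) : (Zmat α X).IsSymm := by
  refine IsSymm.smul ?_ _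
  rw [transpose_Xtilde_mul]
  unfold Wb
  simp only [Pib_smul]
  exact isSymm_sum_transpose_Pib_mul _ (isSymm_transpose_batch_mul_batch X)

theorem range_Zmat_le (α : ℝ) (X : Matrix (Fin B × Fin m) (Fin p) ℝ) :
    LinearMap.range (Zmat α X).mulVecLin ≤ LinearMap.range ((Xtilde α X)ᵀ).mulVecLin := by
  rw [Zmat, ← Matrix.mul_smul, mulVecLin_mul]
  exact LinearMap.range_comp_le_range _ _

theorem Xtilde_apply (α : ℝ) (X : Matrix (Fin B × Fin m) (Fin p) ℝ) (bi : Fin B × Fin m) :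
    Xtilde α X bi = (Pib α (Wb X) bi.1)ᵀ *ᵥ X bi := by
  rw [mulVec_transpose]
  rfl

theorem range_transpose_Xtilde_le (α : ℝ) (X : Matrix (Fin B × Fin m) (Fin p) ℝ) :
    LinearMap.range ((Xtilde α X)ᵀ).mulVecLin ≤ LinearMap.range (Xᵀ).mulVecLin := by
  simp only [range_mulVecLin, col_transpose, row_def]
  have hW (b : Fin B) : Wb X b ∈ (Submodule.span ℝ (Set.range X)).matrixStabilizer :=
    Subalgebra.smul_mem _ (Submodule.transpose_mul_mem_matrixStabilizer (A := batch X b)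
      (fun i => Submodule.subset_span (Set.mem_range_self (b, i))) _) _
  refine Submodule.span_le.2 (Set.range_subset_iff.2 fun bi => ?_)
  rw [Xtilde_apply]
  exact transpose_Pib_mem_matrixStabilizer α
    (fun b => (isSymm_transpose_batch_mul_batch X b).smul _) hW bi.1 _
    (Submodule.subset_span (Set.mem_range_self bi))

end MiniBatchGD

theorem Zmat_symmetric_and_range_general {p B m : ℕ}
    (α : ℝ) (X : Matrix (Fin B × Fin m) (Fin p) ℝ) :
    (Zmat α X)ᵀ = Zmat α X ∧
      LinearMap.range (Zmat α X).mulVecLin ≤ LinearMap.range ((Xtilde α X)ᵀ).mulVecLin ∧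
      LinearMap.range ((Xtilde α X)ᵀ).mulVecLin ≤ LinearMap.range (Xᵀ).mulVecLin :=
  ⟨isSymm_Zmat α X, range_Zmat_le α X, range_transpose_Xtilde_le α X⟩

/-- The sample cross-covariance matrix `Z = (1/n) X̃ᵀ X` of the modified
features with the original features is symmetric (hence all its eigenvalues are real), and
`Range(Z) ⊆ Range(X̃ᵀ) ⊆ Range(Xᵀ)`. -/
theorem Zmat_symmetric_and_range {p B m : ℕ} (hB : 1 ≤ B) (hm : 1 ≤ m) (hp : 1 ≤ p)
    (α : ℝ) (hα : 0 ≤ α) (X : Matrix (Fin B × Fin m) (Fin p) ℝ) :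
    (Zmat α X)ᵀ = Zmat α X ∧
      LinearMap.range (Zmat α X).mulVecLin ≤ LinearMap.range ((Xtilde α X)ᵀ).mulVecLin ∧
      LinearMap.range ((Xtilde α X)ᵀ).mulVecLin ≤ LinearMap.range (Xᵀ).mulVecLin :=
  Zmat_symmetric_and_range_general α X
end
end

section
/- Suppose Π_b = Π := I − p(W) for every b = 1,…,B, where p is a polynomial, that X ∈ ℝ^{n×p} (with p ≤ n) and Π are invertible, with singular value decomposition X = USVᵀ and (1/n)SᵀS diagonal with positive entries λ̂_1,…,λ̂_p, and additionally that VᵀΣV = Λ is diagonal with entries λ_1,…,λ_p. Then for mini-batch gradient descent with random reshuffling with B mini-batches and step size α/B, for every k ≥ 0 the generalization error is R_X(β̄_k) = ∑_{i=1}^p λ_i[1 − αλ̂_i(1 − p(λ̂_i))]^{2k}[Vᵀ(β_0 − β*)]_i² + (σ²/n)∑_{i=1}^p (λ_i/λ̂_i)(1 − [1 − αλ̂_i(1 − p(λ̂_i))]^k)². -/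
/-!
For a fixed order `τ` of the mini-batches, one epoch acts affinely on the error `β - β*`: the
linear part is the ordered product `∏_b (I - αW_{τ(b)})`, and the noise of the batch in
position `j` enters through the product of the factors after position `j`. Averaging over `τ`,
the linear part telescopes to `I - α ∑_b W_b Π_b`, and since reversing `τ` transposes these
products, the noise part becomes `(Bα/n) ∑_b Π_bᵀ X_bᵀ η_b`. When every `Π_b` equals
`Π = I - p(W)`, the mean error after `k` epochs is therefore
`Mᵏ(β₀ - β*) + (∑_{j<k} Mʲ)(α/n) Πᵀ Xᵀ η` with `M = I - αWΠ`, and its risk is the bias term plus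
`σ² tr(Nᵀ Σ N)`, `N` being the coefficient of `η`. Conjugation by `V` diagonalises `W`, `Π`, `M`
and `Σ` simultaneously, which reduces both terms to scalar sums; in the noise term the geometric
sum `∑_{j<k} μʲ` times `αλ̂(1 - p(λ̂)) = 1 - μ` collapses to `1 - μᵏ`.
-/

open Matrix Finset

noncomputable section

open MiniBatchGD MeasureTheory

namespace MiniBatchGD

section SortedList

variable {ι R : Type*} [LinearOrder ι]

theorem prod_reverse_map_one_sub_of_pairwise [Ring R] (w : ι → R) {l : List ι}
    (hl : l.Pairwise (· < ·)) :
    (l.reverse.map (fun j => 1 - w j)).prod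
      = 1 - (l.map fun j =>
          w j * ((l.filter (· < j)).reverse.map (fun i => 1 - w i)).prod).sum := by
  induction l using List.reverseRecOn with
  | nil => simp
  | append_singleton l x ih =>
    rw [List.pairwise_append] at hl
    obtain ⟨hl, -, hlt⟩ := hl
    have hlx : ∀ j ∈ l, j < x := fun j hj => hlt j hj x (List.mem_singleton_self x)
    have hfilter : ∀ j ∈ l, (l ++ [x]).filter (· < j) = l.filter (· < j) := fun j hj => by
      simp [List.filter_append, (hlx j hj).not_gt]
    have hfx : (l ++ [x]).filter (· < x) = l := by
      simpa [List.filter_append] using hlx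
    have hsum : ((l ++ [x]).map fun j =>
          w j * (((l ++ [x]).filter (· < j)).reverse.map (fun i => 1 - w i)).prod).sum
        = (l.map fun j => w j * ((l.filter (· < j)).reverse.map (fun i => 1 - w i)).prod).sum
          + w x * (l.reverse.map (fun i => 1 - w i)).prod := by
      rw [List.map_append, List.sum_append, List.map_congr_left fun j hj => by rw [hfilter j hj]]
      simp only [List.map_singleton, List.sum_singleton, hfx]
    rw [hsum, List.reverse_append, List.map_append, List.prod_append, ih hl]
    simp only [List.reverse_singleton, List.map_singleton, List.prod_singleton]
    noncomm_ring

theorem foldl_mulVec_add_of_pairwise [CommRing R] {n : Type*} [Fintype n] [DecidableEq n]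
    (A : ι → Matrix n n R) (v : ι → n → R) {l : List ι} (hl : l.Pairwise (· < ·))
    (e : n → R) :
    l.foldl (fun e j => A j *ᵥ e + v j) e
      = (l.reverse.map A).prod *ᵥ e
        + (l.map fun j => ((l.filter (j < ·)).reverse.map A).prod *ᵥ v j).sum := by
  induction l using List.reverseRecOn with
  | nil => simp
  | append_singleton l x ih =>
    rw [List.pairwise_append] at hl
    obtain ⟨hl, -, hlt⟩ := hl
    have hlx : ∀ j ∈ l, j < x := fun j hj => hlt j hj x (List.mem_singleton_self x)
    have hfilter : ∀ j ∈ l, (l ++ [x]).filter (j < ·) = l.filter (j < ·) ++ [x] := fun j hj => by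
      simp [List.filter_append, hlx j hj]
    have hfx : (l ++ [x]).filter (x < ·) = [] := by
      simpa [List.filter_append] using fun j hj => (hlx j hj).le
    have hsum :
        ((l ++ [x]).map fun j => (((l ++ [x]).filter (j < ·)).reverse.map A).prod *ᵥ v j).sum
          = A x *ᵥ (l.map fun j => ((l.filter (j < ·)).reverse.map A).prod *ᵥ v j).sum
            + v x := by
      rw [List.map_append, List.sum_append, List.map_congr_left fun j hj => by rw [hfilter j hj]]
      simp only [List.sum_singleton, hfx, List.reverse_append,
        List.reverse_singleton, List.singleton_append, List.map_cons, List.prod_cons,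
        List.reverse_nil, List.map_nil, List.prod_nil, Matrix.one_mulVec, ← Matrix.mulVec_mulVec]
      rw [← Matrix.mulVecLin_apply, map_list_sum, List.map_map]
      rfl
    rw [hsum, List.foldl_append, ih hl]
    simp [Matrix.mulVec_add, Matrix.mulVec_mulVec, add_assoc]

end SortedList

section MatrixFacts

variable {n m : Type*} [Fintype n] [Fintype m]

theorem eq_pow_mulVec_add_geom_sum_mulVec {R : Type*} [CommRing R] [DecidableEq n]
    (M : Matrix n n R) (v : n → R) (e : ℕ → n → R) (he : ∀ k, e (k + 1) = M *ᵥ e k + v)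
    (k : ℕ) : e k = M ^ k *ᵥ e 0 + (∑ j ∈ Finset.range k, M ^ j) *ᵥ v := by
  induction k with
  | zero => simp
  | succ k ih =>
    rw [he, ih, Matrix.mulVec_add, Matrix.mulVec_mulVec, Matrix.mulVec_mulVec, ← pow_succ',
      geom_sum_succ, Matrix.add_mulVec, Matrix.one_mulVec, add_assoc]

theorem mulVec_dotProduct_mulVec_mulVec (A : Matrix n m ℝ) (S : Matrix n n ℝ) (x : m → ℝ) :
    (A *ᵥ x) ⬝ᵥ (S *ᵥ (A *ᵥ x)) = x ⬝ᵥ ((Aᵀ * S * A) *ᵥ x) := by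
  rw [← Matrix.mulVec_mulVec, ← Matrix.mulVec_mulVec, Matrix.dotProduct_mulVec x,
    Matrix.vecMul_transpose]

theorem trace_transpose_mul_mul_of_mul_transpose (A S : Matrix n n ℝ) (X : Matrix m n ℝ) :
    ((A * Xᵀ)ᵀ * S * (A * Xᵀ)).trace = (Aᵀ * S * A * (Xᵀ * X)).trace := by
  rw [Matrix.transpose_mul, Matrix.transpose_transpose]
  simp only [Matrix.mul_assoc]
  rw [Matrix.trace_mul_comm X]
  simp only [Matrix.mul_assoc]

theorem transpose_mul_self_eq_of_svd [DecidableEq m] {X S : Matrix m n ℝ} {U : Matrix m m ℝ}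
    {V : Matrix n n ℝ} (hU : Uᵀ * U = 1) (hX : X = U * S * Vᵀ) :
    Xᵀ * X = V * (Sᵀ * S) * Vᵀ := by
  rw [hX]
  simp only [Matrix.transpose_mul, Matrix.transpose_transpose, Matrix.mul_assoc]
  rw [← Matrix.mul_assoc Uᵀ, hU, Matrix.one_mul]

end MatrixFacts

section Permutations

variable {p B : ℕ} (α : ℝ) (W : Fin B → Matrix (Fin p) (Fin p) ℝ)

theorem prodAll_eq_one_sub_sum (τ : Equiv.Perm (Fin B)) :
    prodAll α W τ = 1 - α • ∑ b, W b * prodBefore α W τ b := by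
  rw [prodAll, prod_reverse_map_one_sub_of_pairwise (fun j => α • W (τ j))
    (List.pairwise_lt_finRange B), ← Fin.sum_univ_def,
    ← Equiv.sum_comp τ (fun b => W b * prodBefore α W τ b), Finset.smul_sum]
  simp [prodBefore]

theorem prodAfter_mul_revPerm (hW : ∀ b, (W b)ᵀ = W b) (τ : Equiv.Perm (Fin B)) (b : Fin B) :
    prodAfter α W (τ * Fin.revPerm) b = (prodBefore α W τ b)ᵀ := by
  have hfilter : ∀ t : Fin B, ((List.finRange B).filter (t.rev < ·)).reverse
      = ((List.finRange B).filter (· < t)).map Fin.rev := by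
    intro t
    conv_lhs => rw [← List.reverse_reverse (List.finRange B), List.finRange_reverse]
    simp [List.filter_map, Function.comp_def]
  have hsymm : (τ * Fin.revPerm).symm b = (τ.symm b).rev := rfl
  rw [prodAfter, prodBefore, hsymm, hfilter, Matrix.transpose_list_prod, List.map_map,
    List.map_map, List.map_reverse, List.reverse_reverse]
  congr 2
  funext j
  simp [hW]

theorem sum_prodAfter_eq_transpose (hW : ∀ b, (W b)ᵀ = W b) (b : Fin B) :
    ∑ τ, prodAfter α W τ b = (∑ τ, prodBefore α W τ b)ᵀ := by
  rw [← Equiv.sum_comp (Equiv.mulRight Fin.revPerm), Matrix.transpose_sum]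
  exact Finset.sum_congr rfl fun τ _ => prodAfter_mul_revPerm α W hW τ b

theorem inv_factorial_smul_sum_prodAll :
    ((B.factorial : ℝ))⁻¹ • ∑ τ, prodAll α W τ = 1 - α • ∑ b, W b * Pib α W b := by
  have hfact : (B.factorial : ℝ) ≠ 0 := by positivity
  simp only [prodAll_eq_one_sub_sum, Finset.sum_sub_distrib, Pib, Matrix.mul_smul,
    Finset.mul_sum, ← Finset.smul_sum, Finset.sum_const, Finset.card_univ, Fintype.card_perm,
    Fintype.card_fin]
  rw [Finset.sum_comm, smul_sub, ← Nat.cast_smul_eq_nsmul ℝ, smul_smul, inv_mul_cancel₀ hfact,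
    one_smul, smul_comm]

theorem inv_factorial_smul_sum_prodAfter (hW : ∀ b, (W b)ᵀ = W b) (b : Fin B) :
    ((B.factorial : ℝ))⁻¹ • ∑ τ, prodAfter α W τ b = (Pib α W b)ᵀ := by
  rw [sum_prodAfter_eq_transpose α W hW, Pib, Matrix.transpose_smul]

end Permutations

section Dynamics

variable {p B m : ℕ} (α : ℝ) (X : Matrix (Fin B × Fin m) (Fin p) ℝ) (βstar : Fin p → ℝ)
  (η : Fin B × Fin m → ℝ)

theorem Wb_transpose (b : Fin B) : (Wb X b)ᵀ = Wb X b := by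
  rw [Wb, Matrix.transpose_smul, Matrix.transpose_mul, Matrix.transpose_transpose]

theorem sum_batch_transpose_mul : ∑ b, (batch X b)ᵀ * batch X b = Xᵀ * X := by
  ext j j'
  simp only [Matrix.sum_apply, Matrix.mul_apply, Matrix.transpose_apply, batch, Matrix.of_apply]
  exact (Fintype.sum_prod_type fun x => X x j * X x j').symm

theorem sum_batch_transpose_mulVec :
    ∑ b, (batch X b)ᵀ *ᵥ (fun i => η (b, i)) = Xᵀ *ᵥ η := by
  ext j
  simp only [Finset.sum_apply, Matrix.mulVec, dotProduct, Matrix.transpose_apply, batch,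
    Matrix.of_apply]
  exact (Fintype.sum_prod_type fun x => X x j * η x).symm

theorem step_sub (b : Fin B) (β : Fin p → ℝ) :
    step α X (X *ᵥ βstar + η) b β - βstar
      = (1 - α • Wb X b) *ᵥ (β - βstar)
        + ((B : ℝ) * α / ((B * m : ℕ) : ℝ)) • ((batch X b)ᵀ *ᵥ fun i => η (b, i)) := by
  have hy : (fun i => (X *ᵥ βstar + η) (b, i)) = batch X b *ᵥ βstar + fun i => η (b, i) := rfl
  simp only [step, hy, Wb, Matrix.sub_mulVec, Matrix.one_mulVec, Matrix.smul_mulVec,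
    ← Matrix.mulVec_mulVec, Matrix.mulVec_sub, Matrix.mulVec_add]
  module

theorem epoch_sub (τ : Equiv.Perm (Fin B)) (β : Fin p → ℝ) :
    epoch α X (X *ᵥ βstar + η) τ β - βstar
      = prodAll α (Wb X) τ *ᵥ (β - βstar)
        + ∑ b, prodAfter α (Wb X) τ b *ᵥ
            (((B : ℝ) * α / ((B * m : ℕ) : ℝ)) • ((batch X b)ᵀ *ᵥ fun i => η (b, i))) := by
  rw [epoch, ← List.foldl_hom (· - βstar) (g₂ := fun e j => (1 - α • Wb X (τ j)) *ᵥ e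
      + ((B : ℝ) * α / ((B * m : ℕ) : ℝ)) • ((batch X (τ j))ᵀ *ᵥ fun i => η (τ j, i)))
      fun β j => by simp [step_sub]]
  rw [foldl_mulVec_add_of_pairwise _ _ (List.pairwise_lt_finRange B), ← Fin.sum_univ_def,
    ← Equiv.sum_comp τ (fun b => prodAfter α (Wb X) τ b *ᵥ
      (((B : ℝ) * α / ((B * m : ℕ) : ℝ)) • ((batch X b)ᵀ *ᵥ fun i => η (b, i))))]
  simp [prodAll, prodAfter]

theorem meanIter_succ_sub (β₀ : Fin p → ℝ) (k : ℕ) :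
    meanIter α X (X *ᵥ βstar + η) β₀ (k + 1) - βstar
      = (1 - α • ∑ b, Wb X b * Pib α (Wb X) b) *ᵥ (meanIter α X (X *ᵥ βstar + η) β₀ k - βstar)
        + ((B : ℝ) * α / ((B * m : ℕ) : ℝ)) •
            ∑ b, (Pib α (Wb X) b)ᵀ *ᵥ ((batch X b)ᵀ *ᵥ fun i => η (b, i)) := by
  have hfact : (B.factorial : ℝ) ≠ 0 := by positivity
  have hconst : ((B.factorial : ℝ))⁻¹ • ∑ _τ : Equiv.Perm (Fin B), βstar = βstar := by
    rw [Finset.sum_const, Finset.card_univ, Fintype.card_perm, Fintype.card_fin,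
      ← Nat.cast_smul_eq_nsmul ℝ, smul_smul, inv_mul_cancel₀ hfact, one_smul]
  have havg : meanIter α X (X *ᵥ βstar + η) β₀ (k + 1) - βstar = ((B.factorial : ℝ))⁻¹ •
      ∑ τ, (epoch α X (X *ᵥ βstar + η) τ (meanIter α X (X *ᵥ βstar + η) β₀ k) - βstar) := by
    rw [Finset.sum_sub_distrib, smul_sub, hconst, meanIter]
  rw [havg]
  simp only [epoch_sub, Finset.sum_add_distrib, smul_add]
  congr 1
  · rw [← Matrix.sum_mulVec, ← Matrix.smul_mulVec, inv_factorial_smul_sum_prodAll]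
  · rw [Finset.sum_comm, Finset.smul_sum, Finset.smul_sum]
    refine Finset.sum_congr rfl fun b _ => ?_
    rw [← Matrix.sum_mulVec, ← Matrix.smul_mulVec,
      inv_factorial_smul_sum_prodAfter _ _ (Wb_transpose X), Matrix.mulVec_smul]

theorem meanIter_sub_of_Pib_eq (P : Matrix (Fin p) (Fin p) ℝ) (hP : ∀ b, Pib α (Wb X) b = P)
    (β₀ : Fin p → ℝ) (k : ℕ) :
    meanIter α X (X *ᵥ βstar + η) β₀ k - βstar
      = (1 - ((B : ℝ) * α / ((B * m : ℕ) : ℝ)) • (Xᵀ * X * P)) ^ k *ᵥ (β₀ - βstar)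
        + ((∑ j ∈ Finset.range k, (1 - ((B : ℝ) * α / ((B * m : ℕ) : ℝ)) • (Xᵀ * X * P)) ^ j)
            * (((B : ℝ) * α / ((B * m : ℕ) : ℝ)) • (Pᵀ * Xᵀ))) *ᵥ η := by
  rw [← Matrix.mulVec_mulVec]
  refine eq_pow_mulVec_add_geom_sum_mulVec _ _
    (fun j => meanIter α X (X *ᵥ βstar + η) β₀ j - βstar) (fun j => ?_) k
  simp only [meanIter_succ_sub, hP, ← Finset.sum_mul, Wb, ← Finset.smul_sum,
    sum_batch_transpose_mul, ← Matrix.mulVec_sum, sum_batch_transpose_mulVec]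
  congr 2
  · rw [Matrix.smul_mul, smul_smul, mul_div_assoc', mul_comm α]
  · rw [Matrix.smul_mulVec, Matrix.mulVec_mulVec]

end Dynamics

section Noise

variable {Ω ι : Type*} [Fintype ι] [MeasurableSpace Ω] {μ : Measure Ω} {η : Ω → ι → ℝ}

theorem integral_dotProduct_eq_zero (hint : ∀ i, Integrable (fun ω => η ω i) μ)
    (hmean : ∀ i, ∫ ω, η ω i ∂μ = 0) (u : ι → ℝ) :
    ∫ ω, u ⬝ᵥ η ω ∂μ = 0 := by
  simp only [dotProduct]
  rw [integral_finsetSum _ fun i _ => (hint i).const_mul (u i)]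
  simp [integral_const_mul, hmean]

theorem dotProduct_mulVec_self_eq_sum (Q : Matrix ι ι ℝ) (x : ι → ℝ) :
    x ⬝ᵥ (Q *ᵥ x) = ∑ i, ∑ j, Q i j * (x i * x j) := by
  simp only [dotProduct, Matrix.mulVec, Finset.mul_sum]
  exact Finset.sum_congr rfl fun i _ => Finset.sum_congr rfl fun j _ => by ring

theorem integrable_dotProduct_mulVec_self
    (hint : ∀ i j, Integrable (fun ω => η ω i * η ω j) μ) (Q : Matrix ι ι ℝ) :
    Integrable (fun ω => η ω ⬝ᵥ (Q *ᵥ η ω)) μ := by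
  simp_rw [dotProduct_mulVec_self_eq_sum]
  exact integrable_finsetSum _ fun i _ => integrable_finsetSum _ fun j _ =>
    (hint i j).const_mul (Q i j)

theorem integral_dotProduct_mulVec_self [DecidableEq ι] {σ : ℝ}
    (hint : ∀ i j, Integrable (fun ω => η ω i * η ω j) μ)
    (hcov : ∀ i j, ∫ ω, η ω i * η ω j ∂μ = if i = j then σ ^ 2 else 0)
    (Q : Matrix ι ι ℝ) :
    ∫ ω, η ω ⬝ᵥ (Q *ᵥ η ω) ∂μ = σ ^ 2 * Q.trace := by
  simp_rw [dotProduct_mulVec_self_eq_sum]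
  rw [integral_finsetSum _ fun i _ =>
    integrable_finsetSum _ fun j _ => (hint i j).const_mul (Q i j)]
  simp_rw [integral_finsetSum _ fun j _ => (hint _ j).const_mul (Q _ j), integral_const_mul, hcov]
  simp [Matrix.trace, Finset.mul_sum, mul_comm]

theorem integral_quadForm_affine [DecidableEq ι] [IsProbabilityMeasure μ] {n : Type*} [Fintype n]
    {σ : ℝ}
    (hint1 : ∀ i, Integrable (fun ω => η ω i) μ)
    (hint2 : ∀ i j, Integrable (fun ω => η ω i * η ω j) μ)
    (hmean : ∀ i, ∫ ω, η ω i ∂μ = 0)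
    (hcov : ∀ i j, ∫ ω, η ω i * η ω j ∂μ = if i = j then σ ^ 2 else 0)
    (a : n → ℝ) (N : Matrix n ι ℝ) (S : Matrix n n ℝ) :
    ∫ ω, (a + N *ᵥ η ω) ⬝ᵥ (S *ᵥ (a + N *ᵥ η ω)) ∂μ
      = a ⬝ᵥ (S *ᵥ a) + σ ^ 2 * (Nᵀ * S * N).trace := by
  set u := (S *ᵥ a) ᵥ* N + (a ᵥ* S) ᵥ* N
  have hexp : ∀ x : ι → ℝ, (a + N *ᵥ x) ⬝ᵥ (S *ᵥ (a + N *ᵥ x))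
      = a ⬝ᵥ (S *ᵥ a) + (u ⬝ᵥ x + x ⬝ᵥ ((Nᵀ * S * N) *ᵥ x)) := by
    intro x
    have h₁ : (S *ᵥ a) ᵥ* N ⬝ᵥ x = (N *ᵥ x) ⬝ᵥ (S *ᵥ a) := by
      rw [← Matrix.dotProduct_mulVec, dotProduct_comm]
    have h₂ : (a ᵥ* S) ᵥ* N ⬝ᵥ x = a ⬝ᵥ (S *ᵥ (N *ᵥ x)) := by
      rw [← Matrix.dotProduct_mulVec, ← Matrix.dotProduct_mulVec]
    have h₃ : x ⬝ᵥ ((Nᵀ * S * N) *ᵥ x) = (N *ᵥ x) ⬝ᵥ (S *ᵥ (N *ᵥ x)) := by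
      rw [← Matrix.mulVec_mulVec, ← Matrix.mulVec_mulVec, Matrix.dotProduct_mulVec,
        Matrix.vecMul_transpose]
    rw [Matrix.mulVec_add, dotProduct_add, add_dotProduct, add_dotProduct, add_dotProduct, h₁, h₂,
      h₃]
    abel
  have hlin : Integrable (fun ω => u ⬝ᵥ η ω) μ :=
    integrable_finsetSum _ fun i _ => (hint1 i).const_mul _
  have hquad := integrable_dotProduct_mulVec_self hint2 (Nᵀ * S * N)
  simp_rw [hexp]
  rw [integral_add (integrable_const _) (by exact hlin.add hquad), integral_add hlin hquad,
    integral_dotProduct_eq_zero hint1 hmean, integral_dotProduct_mulVec_self hint2 hcov]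
  simp

end Noise

section Spectral

variable {n : Type*} [Fintype n] [DecidableEq n]

theorem mem_unitary_of_orthogonal {V : Matrix n n ℝ} (hV : Vᵀ * V = 1 ∧ V * Vᵀ = 1) :
    V ∈ unitary (Matrix n n ℝ) := by
  rwa [Unitary.mem_iff, Matrix.star_eq_conjTranspose,
    Matrix.conjTranspose_eq_transpose_of_trivial]

def conjDiagonal {V : Matrix n n ℝ} (hV : Vᵀ * V = 1 ∧ V * Vᵀ = 1) :
    (n → ℝ) →ₐ[ℝ] Matrix n n ℝ :=
  (AlgHomClass.toAlgHom (Unitary.conjStarAlgAut ℝ _ ⟨V, mem_unitary_of_orthogonal hV⟩)).comp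
    (Matrix.diagonalAlgHom ℝ)

variable {V : Matrix n n ℝ} (hV : Vᵀ * V = 1 ∧ V * Vᵀ = 1)

theorem conjDiagonal_apply (f : n → ℝ) : conjDiagonal hV f = V * Matrix.diagonal f * Vᵀ := by
  simp [conjDiagonal, Matrix.star_eq_conjTranspose]

theorem eq_conjDiagonal_of_conj_eq_diagonal {A : Matrix n n ℝ} {f : n → ℝ}
    (hA : Vᵀ * A * V = Matrix.diagonal f) : A = conjDiagonal hV f := by
  rw [conjDiagonal_apply, ← hA, ← Matrix.mul_assoc, ← Matrix.mul_assoc, hV.2, Matrix.one_mul,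
    Matrix.mul_assoc, hV.2, Matrix.mul_one]

theorem transpose_mul_self_eq_smul_conjDiagonal {k : Type*} [Fintype k] [DecidableEq k]
    {X S : Matrix k n ℝ} {U : Matrix k k ℝ} (hU : Uᵀ * U = 1) (hX : X = U * S * Vᵀ) {c : ℝ}
    (hc : c ≠ 0) {f : n → ℝ} (hS : c⁻¹ • (Sᵀ * S) = Matrix.diagonal f) :
    Xᵀ * X = c • conjDiagonal hV f := by
  rw [transpose_mul_self_eq_of_svd hU hX, (inv_smul_eq_iff₀ hc).mp hS, conjDiagonal_apply,
    Matrix.mul_smul, Matrix.smul_mul]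

theorem transpose_conjDiagonal (f : n → ℝ) : (conjDiagonal hV f)ᵀ = conjDiagonal hV f := by
  simp [conjDiagonal_apply, Matrix.mul_assoc]

theorem trace_conjDiagonal (f : n → ℝ) : (conjDiagonal hV f).trace = ∑ i, f i := by
  rw [conjDiagonal_apply, Matrix.trace_mul_cycle, hV.1, Matrix.one_mul, Matrix.trace_diagonal]

theorem aeval_conjDiagonal (f : n → ℝ) (q : Polynomial ℝ) :
    Polynomial.aeval (conjDiagonal hV f) q = conjDiagonal hV fun i => q.eval (f i) := by
  rw [Polynomial.aeval_algHom_apply, Polynomial.aeval_pi_apply]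
  rfl

theorem dotProduct_conjDiagonal_mulVec (f x : n → ℝ) :
    x ⬝ᵥ (conjDiagonal hV f *ᵥ x) = ∑ i, f i * (Vᵀ *ᵥ x) i ^ 2 := by
  have h := mulVec_dotProduct_mulVec_mulVec Vᵀ (Matrix.diagonal f) x
  rw [Matrix.transpose_transpose] at h
  rw [conjDiagonal_apply, ← h]
  simp only [dotProduct, Matrix.mulVec_diagonal]
  exact Finset.sum_congr rfl fun i _ => by ring

theorem pow_mulVec_dotProduct_conjDiagonal_mulVec (ν f x : n → ℝ) (k : ℕ) :
    (conjDiagonal hV ν ^ k *ᵥ x) ⬝ᵥ (conjDiagonal hV f *ᵥ (conjDiagonal hV ν ^ k *ᵥ x))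
      = ∑ i, f i * ν i ^ (2 * k) * (Vᵀ *ᵥ x) i ^ 2 := by
  rw [mulVec_dotProduct_mulVec_mulVec, ← map_pow, transpose_conjDiagonal, ← map_mul, ← map_mul,
    dotProduct_conjDiagonal_mulVec]
  refine Finset.sum_congr rfl fun i _ => ?_
  simp only [Pi.mul_apply, Pi.pow_apply]
  ring

theorem trace_conjDiagonal_mul_transpose {k : Type*} [Fintype k] {X : Matrix k n ℝ} {c : ℝ}
    {f : n → ℝ} (hX : Xᵀ * X = c • conjDiagonal hV f) (g h : n → ℝ) :
    ((conjDiagonal hV g * Xᵀ)ᵀ * conjDiagonal hV h * (conjDiagonal hV g * Xᵀ)).trace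
      = c * ∑ i, g i ^ 2 * h i * f i := by
  rw [trace_transpose_mul_mul_of_mul_transpose, transpose_conjDiagonal, hX, Matrix.mul_smul,
    ← map_mul, ← map_mul, ← map_mul, Matrix.trace_smul, trace_conjDiagonal, smul_eq_mul]
  congr 1
  refine Finset.sum_congr rfl fun i _ => ?_
  simp only [Pi.mul_apply]
  ring

end Spectral

section Diagonalised

variable {p B m : ℕ} {α : ℝ} {X : Matrix (Fin B × Fin m) (Fin p) ℝ} {V : Matrix (Fin p) (Fin p) ℝ}
  (hV : Vᵀ * V = 1 ∧ V * Vᵀ = 1) {lamh π : Fin p → ℝ}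

theorem meanIter_sub_eq_of_conjDiagonal (hB : (B : ℝ) ≠ 0) (hn : ((B * m : ℕ) : ℝ) ≠ 0)
    (hXX : Xᵀ * X = ((B * m : ℕ) : ℝ) • conjDiagonal hV lamh)
    (hP : ∀ b, Pib (α / B) (Wb X) b = conjDiagonal hV π)
    (βstar : Fin p → ℝ) (η : Fin B × Fin m → ℝ) (β₀ : Fin p → ℝ) (k : ℕ) :
    meanIter (α / B) X (X *ᵥ βstar + η) β₀ k - βstar
      = conjDiagonal hV (1 - α • (lamh * π)) ^ k *ᵥ (β₀ - βstar)
        + (conjDiagonal hV ((α / ((B * m : ℕ) : ℝ)) •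
            ((∑ j ∈ Finset.range k, (1 - α • (lamh * π)) ^ j) * π)) * Xᵀ) *ᵥ η := by
  have hstep : (B : ℝ) * (α / B) / ((B * m : ℕ) : ℝ) = α / ((B * m : ℕ) : ℝ) := by
    field_simp
  have hM : 1 - (α / ((B * m : ℕ) : ℝ)) • (Xᵀ * X * conjDiagonal hV π)
      = conjDiagonal hV (1 - α • (lamh * π)) := by
    rw [hXX, smul_mul_assoc, smul_smul, div_mul_cancel₀ α hn, map_sub, map_one, map_smul,
      map_mul]
  rw [meanIter_sub_of_Pib_eq _ X βstar η _ hP, hstep, hM, transpose_conjDiagonal]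
  simp only [← map_pow, ← map_sum, map_smul, map_mul, Matrix.smul_mul, Matrix.mul_smul,
    Matrix.mul_assoc]

end Diagonalised

end MiniBatchGD

theorem fixedp_error_limit_risk_general {p B m : ℕ} (hB : 1 ≤ B) (hm : 1 ≤ m)
    (α : ℝ) (X : Matrix (Fin B × Fin m) (Fin p) ℝ)
    (βstar β₀ : Fin p → ℝ)
    {Ω : Type*} [MeasurableSpace Ω] (μ : Measure Ω) [IsProbabilityMeasure μ]
    (η : Ω → Fin B × Fin m → ℝ) (σ : ℝ)
    (hint1 : ∀ i, Integrable (fun ω => η ω i) μ)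
    (hint2 : ∀ i j, Integrable (fun ω => η ω i * η ω j) μ)
    (hmean : ∀ i, ∫ ω, η ω i ∂μ = 0)
    (hcov : ∀ i j, ∫ ω, η ω i * η ω j ∂μ = if i = j then σ ^ 2 else 0)
    (Sg : Matrix (Fin p) (Fin p) ℝ)
    (W : Matrix (Fin p) (Fin p) ℝ) (hW : W = (((B * m : ℕ) : ℝ))⁻¹ • (Xᵀ * X))
    (q : Polynomial ℝ)
    (hPiEq : ∀ b : Fin B, Pib (α / B) (Wb X) b = 1 - Polynomial.aeval W q)
    (U : Matrix (Fin B × Fin m) (Fin B × Fin m) ℝ)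
    (S : Matrix (Fin B × Fin m) (Fin p) ℝ) (V : Matrix (Fin p) (Fin p) ℝ)
    (hU : Uᵀ * U = 1 ∧ U * Uᵀ = 1) (hV : Vᵀ * V = 1 ∧ V * Vᵀ = 1)
    (hX : X = U * S * Vᵀ)
    (lamh : Fin p → ℝ) (hlam : (((B * m : ℕ) : ℝ))⁻¹ • (Sᵀ * S) = Matrix.diagonal lamh)
    (hlampos : ∀ i, 0 < lamh i)
    (lam : Fin p → ℝ) (hΛ : Vᵀ * Sg * V = Matrix.diagonal lam) :
    ∀ k : ℕ,
      (∫ ω, (meanIter (α / B) X (X *ᵥ βstar + η ω) β₀ k - βstar) ⬝ᵥ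
          (Sg *ᵥ (meanIter (α / B) X (X *ᵥ βstar + η ω) β₀ k - βstar)) ∂μ) =
        (∑ i, lam i * (1 - α * lamh i * (1 - Polynomial.eval (lamh i) q)) ^ (2 * k) *
            ((Vᵀ *ᵥ (β₀ - βstar)) i) ^ 2) +
          σ ^ 2 / ((B * m : ℕ) : ℝ) *
            ∑ i, lam i / lamh i *
              (1 - (1 - α * lamh i * (1 - Polynomial.eval (lamh i) q)) ^ k) ^ 2 := by
  intro k
  have hn : ((B * m : ℕ) : ℝ) ≠ 0 := by positivity
  have hXX := transpose_mul_self_eq_smul_conjDiagonal hV hU.1 hX hn hlam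
  have hPi : 1 - Polynomial.aeval W q = conjDiagonal hV fun i => 1 - q.eval (lamh i) := by
    rw [hW, hXX, inv_smul_smul₀ hn, aeval_conjDiagonal, ← map_one (conjDiagonal hV), ← map_sub]
    rfl
  simp_rw [meanIter_sub_eq_of_conjDiagonal hV (by positivity) hn hXX
    (fun b => (hPiEq b).trans hPi)]
  rw [integral_quadForm_affine hint1 hint2 hmean hcov, eq_conjDiagonal_of_conj_eq_diagonal hV hΛ,
    pow_mulVec_dotProduct_conjDiagonal_mulVec, trace_conjDiagonal_mul_transpose hV hXX,
    Finset.mul_sum, Finset.mul_sum, Finset.mul_sum]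
  congr 1 <;> refine Finset.sum_congr rfl fun i _ => ?_
  · simp only [Pi.sub_apply, Pi.one_apply, Pi.smul_apply, Pi.mul_apply, smul_eq_mul, mul_assoc]
  · have hgeo := geom_sum_mul_neg (1 - α * lamh i * (1 - q.eval (lamh i))) k
    have hl : lamh i ≠ 0 := (hlampos i).ne'
    simp only [Pi.sub_apply, Pi.one_apply, Pi.smul_apply, Pi.mul_apply, Pi.pow_apply,
      Finset.sum_apply, smul_eq_mul, ← mul_assoc] at hgeo ⊢
    rw [← hgeo]
    field_simp
    ring

/-- Proposition `fixedp_error_limit`, second part. Under the assumptions of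
Statement 8, and assuming additionally that `VᵀΣV = Λ` is diagonal with entries
`λ_1, …, λ_p`, the generalization error of mini-batch gradient descent with random
reshuffling, `B` mini-batches and step size `α/B` is
`R_X(β̄_k) = ∑_i λ_i[1 − αλ̂_i(1 − p(λ̂_i))]^{2k}[Vᵀ(β₀ − β*)]_i²
  + (σ²/n) ∑_i (λ_i/λ̂_i)(1 − [1 − αλ̂_i(1 − p(λ̂_i))]^k)²`. -/
theorem fixedp_error_limit_risk {p B m : ℕ} (hB : 1 ≤ B) (hm : 1 ≤ m) (hp : 1 ≤ p)
    (α : ℝ) (hα : 0 ≤ α) (X : Matrix (Fin B × Fin m) (Fin p) ℝ)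
    (βstar β₀ : Fin p → ℝ)
    {Ω : Type*} [MeasurableSpace Ω] (μ : Measure Ω) [IsProbabilityMeasure μ]
    (η : Ω → Fin B × Fin m → ℝ) (σ : ℝ) (hσ : 0 ≤ σ)
    (hint1 : ∀ i, Integrable (fun ω => η ω i) μ)
    (hint2 : ∀ i j, Integrable (fun ω => η ω i * η ω j) μ)
    (hmean : ∀ i, ∫ ω, η ω i ∂μ = 0)
    (hcov : ∀ i j, ∫ ω, η ω i * η ω j ∂μ = if i = j then σ ^ 2 else 0)
    (Sg : Matrix (Fin p) (Fin p) ℝ) (hSg : Sg.PosSemidef)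
    (W : Matrix (Fin p) (Fin p) ℝ) (hW : W = (((B * m : ℕ) : ℝ))⁻¹ • (Xᵀ * X))
    (q : Polynomial ℝ)
    (hPiEq : ∀ b : Fin B, Pib (α / B) (Wb X) b = 1 - Polynomial.aeval W q)
    (hpn : p ≤ B * m) (hXrank : X.rank = p)
    (hPiUnit : IsUnit ((1 : Matrix (Fin p) (Fin p) ℝ) - Polynomial.aeval W q))
    (U : Matrix (Fin B × Fin m) (Fin B × Fin m) ℝ)
    (S : Matrix (Fin B × Fin m) (Fin p) ℝ) (V : Matrix (Fin p) (Fin p) ℝ)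
    (hU : Uᵀ * U = 1 ∧ U * Uᵀ = 1) (hV : Vᵀ * V = 1 ∧ V * Vᵀ = 1)
    (hX : X = U * S * Vᵀ)
    (κ : Fin p ↪ Fin B × Fin m)
    (hSdiag : ∀ (r : Fin B × Fin m) (j : Fin p), r ≠ κ j → S r j = 0)
    (lamh : Fin p → ℝ) (hlam : (((B * m : ℕ) : ℝ))⁻¹ • (Sᵀ * S) = Matrix.diagonal lamh)
    (hlampos : ∀ i, 0 < lamh i)
    (lam : Fin p → ℝ) (hΛ : Vᵀ * Sg * V = Matrix.diagonal lam) :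
    ∀ k : ℕ,
      (∫ ω, (meanIter (α / B) X (X *ᵥ βstar + η ω) β₀ k - βstar) ⬝ᵥ
          (Sg *ᵥ (meanIter (α / B) X (X *ᵥ βstar + η ω) β₀ k - βstar)) ∂μ) =
        (∑ i, lam i * (1 - α * lamh i * (1 - Polynomial.eval (lamh i) q)) ^ (2 * k) *
            ((Vᵀ *ᵥ (β₀ - βstar)) i) ^ 2) +
          σ ^ 2 / ((B * m : ℕ) : ℝ) *
            ∑ i, lam i / lamh i *
              (1 - (1 - α * lamh i * (1 - Polynomial.eval (lamh i) q)) ^ k) ^ 2 :=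
  fixedp_error_limit_risk_general hB hm α X βstar β₀ μ η σ hint1 hint2 hmean hcov Sg W hW q hPiEq U
    S V hU hV hX lamh hlam hlampos lam hΛ
end
end

section
/- (Matrix geometric series via pseudoinverse.) Let A ∈ ℝ^{p×p} be symmetric, and let P := (I − A)(I − A)† and P_0 := I − P be the orthogonal projectors onto the range and nullspace of I − A, respectively. Then for every k ≥ 1, I + A + A² + ⋯ + A^{k−1} = (I − A^k)(I − A)† + k·P_0. -/
open Matrix Finset

/-- `Ad` is the Moore–Penrose pseudoinverse of `A`. -/
def IsMoorePenrose {n₁ n₂ : Type*} [Fintype n₁] [Fintype n₂]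
    (A : Matrix n₁ n₂ ℝ) (Ad : Matrix n₂ n₁ ℝ) : Prop :=
  A * Ad * A = A ∧ Ad * A * Ad = Ad ∧ (A * Ad)ᵀ = A * Ad ∧ (Ad * A)ᵀ = Ad * A

/-! Write `B := 1 - A` and `P₀ := 1 - B B†`. For symmetric `B` the projector `P₀` is killed by
`B` on the left, i.e. it is fixed by `A`, so `(∑_{i<k} Aⁱ) P₀ = k P₀`. On the other hand
`(∑_{i<k} Aⁱ) B = 1 - Aᵏ`, so splitting `1 = B B† + P₀` gives the identity. -/

theorem IsMoorePenrose.mul_one_sub_mul_eq_zero {n : Type*} [Fintype n] [DecidableEq n]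
    {B Bd : Matrix n n ℝ} (h : IsMoorePenrose B Bd) (hB : Bᵀ = B) :
    B * (1 - B * Bd) = 0 := by
  obtain ⟨hBBdB, -, hBBd, -⟩ := h
  have : B * (B * Bd) = B :=
    calc B * (B * Bd) = (B * Bd * B)ᵀ := by rw [transpose_mul, hB, hBBd]
      _ = B := by rw [hBBdB, hB]
  rw [mul_sub, mul_one, this, sub_self]

theorem geom_sum_mul_of_mul_eq {R : Type*} [Semiring R] {a b : R} (h : a * b = b) (k : ℕ) :
    (∑ i ∈ range k, a ^ i) * b = k • b := by
  have hpow (i : ℕ) : a ^ i * b = b := by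
    induction i with
    | zero => rw [pow_zero, one_mul]
    | succ i ih => rw [pow_succ, mul_assoc, h, ih]
  simp only [sum_mul, hpow, sum_const, card_range]

/-- Lemma `geometric_series_pinv`. Let `A ∈ ℝ^{p×p}` be symmetric, and let
`P := (I − A)(I − A)†` and `P₀ := I − P` be the orthogonal projectors onto the range and
nullspace of `I − A`. Then for every `k ≥ 1`,
`I + A + A² + ⋯ + A^{k−1} = (I − A^k)(I − A)† + k·P₀`. -/
theorem geometric_series_pinv {p : ℕ} (A : Matrix (Fin p) (Fin p) ℝ) (hA : Aᵀ = A)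
    (Ad : Matrix (Fin p) (Fin p) ℝ) (hAd : IsMoorePenrose (1 - A) Ad) :
    ∀ k : ℕ, 1 ≤ k →
      (∑ i ∈ Finset.range k, A ^ i) =
        (1 - A ^ k) * Ad + (k : ℝ) • (1 - (1 - A) * Ad) := by
  intro k _
  set P₀ := 1 - (1 - A) * Ad
  have hsymm : (1 - A)ᵀ = 1 - A := by rw [transpose_sub, transpose_one, hA]
  have hAP₀ : A * P₀ = P₀ := by
    have := hAd.mul_one_sub_mul_eq_zero hsymm
    rwa [sub_mul, one_mul, sub_eq_zero, eq_comm] at this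
  calc ∑ i ∈ range k, A ^ i
      = (∑ i ∈ range k, A ^ i) * ((1 - A) * Ad) + (∑ i ∈ range k, A ^ i) * P₀ := by
        rw [← mul_add, add_sub_cancel, mul_one]
    _ = (1 - A ^ k) * Ad + (k : ℝ) • P₀ := by
        rw [← mul_assoc, geom_sum_mul_neg, geom_sum_mul_of_mul_eq hAP₀, Nat.cast_smul_eq_nsmul]
end

section
/- (Two representations of the batch-modification matrix.) Let W_1, …, W_B be arbitrary square matrices of the same size and α a scalar. Then for every b ∈ {1,…,B}, (1/B!)∑_{τ∈S_B} ∏_{j<τ⁻¹(b)}(I − αW_{τ(j)}) = (1/B!)∑_{τ∈S_B} ∏_{j>τ⁻¹(b)}(I − αW_{τ(j)}), where in each product the factors are ordered by decreasing index j (the factor with largest j leftmost) and the empty product is I; i.e. the averaged product over the batches preceding b equals the averaged product over the batches following b. -/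
/-! Conditioning on the position `t = τ⁻¹(b)`, the factors before `b` are `τ 0, …, τ (t-1)` in order.
Composing `τ` with the position permutation `ρ_t` that exchanges the block before `t` with the block after
it moves `b` to position `B - 1 - t` and makes the factors after `b` exactly `τ 0, …, τ (t-1)`, in
the same order. The map `τ ↦ τ ∘ ρ_{τ⁻¹(b)}` is a bijection of `S_B` (it is injective since
`τ⁻¹(b)` can be read off its image), so the two sums have the same terms. -/


open Matrix Finset

noncomputable section

open MiniBatchGD

namespace List

variable {α : Type*} {l : List α} {p : α → Bool} {n : ℕ}

theorem filter_eq_take_of_getElem (h : ∀ (i : ℕ) (hi : i < l.length), p l[i] ↔ i < n) :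
    l.filter p = l.take n := by
  conv_lhs => rw [← take_append_drop n l, filter_append]
  rw [filter_eq_self.mpr, filter_eq_nil_iff.mpr, append_nil]
  · intro a ha
    obtain ⟨i, hi, rfl⟩ := mem_drop_iff_getElem.mp ha
    simp [h]
  · intro a ha
    obtain ⟨i, hi, rfl⟩ := mem_take_iff_getElem.mp ha
    simp only [h]
    omega

theorem filter_eq_drop_of_getElem (h : ∀ (i : ℕ) (hi : i < l.length), p l[i] ↔ n ≤ i) :
    l.filter p = l.drop n := by
  conv_lhs => rw [← take_append_drop n l, filter_append]
  rw [filter_eq_nil_iff.mpr, filter_eq_self.mpr, nil_append]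
  · intro a ha
    obtain ⟨i, hi, rfl⟩ := mem_drop_iff_getElem.mp ha
    simp [h]
  · intro a ha
    obtain ⟨i, hi, rfl⟩ := mem_take_iff_getElem.mp ha
    simp only [h]
    omega

theorem filter_lt_finRange {B : ℕ} (t : Fin B) :
    (finRange B).filter (· < t) = (finRange B).take t :=
  filter_eq_take_of_getElem fun i hi => by simp [Fin.lt_def]

theorem filter_gt_finRange {B : ℕ} (t : Fin B) :
    (finRange B).filter (t < ·) = (finRange B).drop (t + 1) :=
  filter_eq_drop_of_getElem fun i hi => by simp [Fin.lt_def]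

end List

namespace Fin

variable {B : ℕ}

/-- Reading `τ * blockSwap t` in order lists the entries of `τ` after position `t`, then `τ t`,
then the entries of `τ` before position `t`. -/
def blockSwap (t : Fin B) : Equiv.Perm (Fin B) :=
  Equiv.ofBijective
    (fun j => if h : j + t + 1 < B then ⟨j + t + 1, h⟩
      else if j + t + 1 = B then t else ⟨j + t - B, by omega⟩)
    (Finite.injective_iff_bijective.mp fun i j hij => by
      split_ifs at hij <;> simp only [Fin.ext_iff] at hij ⊢ <;> omega)

theorem blockSwap_rev_self (t : Fin B) : blockSwap t t.rev = t := by
  have := t.isLt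
  simp only [blockSwap, Equiv.ofBijective_apply, val_rev]
  rw [dif_neg (by omega), if_pos (by omega)]

theorem blockSwap_symm_self (t : Fin B) : (blockSwap t).symm t = t.rev :=
  (Equiv.symm_apply_eq _).mpr (blockSwap_rev_self t).symm

theorem val_blockSwap_of_rev_lt {t j : Fin B} (h : t.rev < j) :
    (blockSwap t j : ℕ) = j + t - B := by
  rw [lt_def, val_rev] at h
  simp only [blockSwap, Equiv.ofBijective_apply]
  rw [dif_neg (by omega), if_neg (by omega)]

theorem map_blockSwap_filter_rev_lt (t : Fin B) :
    ((List.finRange B).filter (t.rev < ·)).map (blockSwap t) = (List.finRange B).filter (· < t) := by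
  rw [List.filter_gt_finRange, List.filter_lt_finRange]
  refine List.ext_getElem (by simp [val_rev]; omega) fun i h₁ h₂ => ?_
  simp only [List.length_map, List.length_drop, List.length_finRange, val_rev] at h₁
  simp only [List.getElem_map, List.getElem_drop, List.getElem_take, List.getElem_finRange,
    Fin.ext_iff, Fin.val_cast]
  rw [val_blockSwap_of_rev_lt (by simp [lt_def, val_rev]; omega)]
  simp [val_rev]
  omega

theorem mul_blockSwap_symm_apply (τ : Equiv.Perm (Fin B)) (b : Fin B) :
    (τ * blockSwap (τ.symm b)).symm b = (τ.symm b).rev := by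
  simp [Equiv.Perm.mul_def, blockSwap_symm_self]

theorem bijective_mul_blockSwap (b : Fin B) :
    Function.Bijective fun τ : Equiv.Perm (Fin B) => τ * blockSwap (τ.symm b) := by
  refine Finite.injective_iff_bijective.mp fun σ τ h => ?_
  have hpos : σ.symm b = τ.symm b := by
    simpa [mul_blockSwap_symm_apply] using congrArg (fun π : Equiv.Perm (Fin B) => π.symm b) h
  simp only [hpos] at h
  exact mul_right_cancel h

end Fin

namespace MiniBatchGD

theorem prodBefore_eq_prodAfter_mul_blockSwap {p B : ℕ} (α : ℝ)
    (W : Fin B → Matrix (Fin p) (Fin p) ℝ) (τ : Equiv.Perm (Fin B)) (b : Fin B) :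
    prodBefore α W τ b = prodAfter α W (τ * Fin.blockSwap (τ.symm b)) b := by
  rw [prodBefore, prodAfter, Fin.mul_blockSwap_symm_apply, ← Fin.map_blockSwap_filter_rev_lt,
    ← List.map_reverse, List.map_map]
  rfl

end MiniBatchGD

theorem before_eq_after_general {p B : ℕ} (α : ℝ)
    (W : Fin B → Matrix (Fin p) (Fin p) ℝ) :
    ∀ b : Fin B,
      ((B.factorial : ℝ))⁻¹ • ∑ τ : Equiv.Perm (Fin B), prodBefore α W τ b =
        ((B.factorial : ℝ))⁻¹ • ∑ τ : Equiv.Perm (Fin B), prodAfter α W τ b := by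
  intro b
  rw [Fintype.sum_bijective _ (Fin.bijective_mul_blockSwap b) _ (prodAfter α W · b)
    fun τ => prodBefore_eq_prodAfter_mul_blockSwap α W τ b]

/-- Two representations of the batch-modification matrix, equations
`eq:app_modified_batches1` / `eq:app_modified_batches2`. For arbitrary square matrices
`W_1, …, W_B` and a scalar `α`, for every `b`,
`(1/B!)∑_{τ∈S_B} ∏_{j<τ⁻¹(b)}(I − αW_{τ(j)}) = (1/B!)∑_{τ∈S_B} ∏_{j>τ⁻¹(b)}(I − αW_{τ(j)})`,
with factors in each product ordered by decreasing position `j`. -/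
theorem before_eq_after {p B : ℕ} (hB : 1 ≤ B) (α : ℝ)
    (W : Fin B → Matrix (Fin p) (Fin p) ℝ) :
    ∀ b : Fin B,
      ((B.factorial : ℝ))⁻¹ • ∑ τ : Equiv.Perm (Fin B), prodBefore α W τ b =
        ((B.factorial : ℝ))⁻¹ • ∑ τ : Equiv.Perm (Fin B), prodAfter α W τ b :=
  before_eq_after_general α W
end
end

section
/- (Commutation identity underlying the symmetry of Z.) Let W_1, …, W_B be arbitrary square matrices of the same size and α a scalar, and for each b set Π_b := (1/B!)∑_{τ∈S_B} ∏_{j>τ⁻¹(b)}(I − αW_{τ(j)}), with factors in each product ordered by decreasing index j and empty product equal to I. Then ∑_{b=1}^B Π_bW_b = ∑_{b=1}^B W_bΠ_b. -/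
open Matrix Finset

noncomputable section

open MiniBatchGD

/-!
Fix a permutation `τ` and write `A_i = α W_{τ(i)}`. Both `∑_i P_{>i} A_i` and `∑_i A_i P_{<i}`,
where `P_{>i}` and `P_{<i}` are the ordered products of the factors `I - A_j` after and before
position `i`, telescope to `I - ∏_j (I - A_j)`. It remains to trade `A_i P_{>i}` for
`A_{i'} P_{<i'}` inside the average over `τ`: composing `τ` with a fixed permutation that moves
the block of positions after `i` to the front, followed by position `i`, does this with
`i' = B - 1 - i`. For `α ≠ 0` the two sides of the identity, multiplied by `α`, are therefore
both equal to `∑_τ (I - ∏_j (I - A_j))`; for `α = 0` every `Π_b` is `I`.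
-/

theorem sum_ofFn_drop_reverse_prod_mul_one_sub {R : Type*} [Ring R] :
    ∀ {n : ℕ} (g : Fin n → R),
      ∑ i : Fin n, ((List.ofFn g).drop (i + 1)).reverse.prod * (1 - g i) =
        1 - (List.ofFn g).reverse.prod
  | 0, g => by simp
  | n + 1, g => by
    rw [Fin.sum_univ_succ, List.ofFn_succ]
    simp only [Fin.val_succ, Fin.val_zero, List.drop_succ_cons, List.drop_zero,
      sum_ofFn_drop_reverse_prod_mul_one_sub, List.reverse_cons, List.prod_append,
      List.prod_singleton]
    noncomm_ring

theorem sum_one_sub_mul_ofFn_take_reverse_prod {R : Type*} [Ring R] :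
    ∀ {n : ℕ} (g : Fin n → R),
      ∑ i : Fin n, (1 - g i) * ((List.ofFn g).take i).reverse.prod =
        1 - (List.ofFn g).reverse.prod
  | 0, g => by simp
  | n + 1, g => by
    rw [Fin.sum_univ_succ, List.ofFn_succ]
    simp only [Fin.val_succ, Fin.val_zero, List.take_succ_cons, List.take_zero,
      List.reverse_cons, List.reverse_nil, List.prod_append, List.prod_singleton, List.prod_nil,
      ← mul_assoc, ← Finset.sum_mul, sum_one_sub_mul_ofFn_take_reverse_prod, mul_one]
    noncomm_ring

theorem List.filter_finRange_gt {n : ℕ} (c : Fin n) :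
    (List.finRange n).filter (c < ·) = (List.finRange n).drop (c + 1) := by
  have hle : ∀ j ∈ (List.finRange n).take (c + 1), ¬ c < j := by
    intro j hj
    obtain ⟨k, hk, rfl⟩ := List.mem_take_iff_getElem.1 hj
    simp only [getElem_finRange, Fin.cast_mk, Fin.lt_def, not_lt]
    omega
  have hgt : ∀ j ∈ (List.finRange n).drop (c + 1), c < j := by
    intro j hj
    obtain ⟨k, hk, rfl⟩ := List.mem_drop_iff_getElem.1 hj
    simp only [getElem_finRange, Fin.cast_mk, Fin.lt_def]
    omega
  conv_lhs => rw [← List.take_append_drop (c + 1) (List.finRange n)]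
  rw [List.filter_append, List.filter_eq_nil_iff.2 (by simpa using hle),
    List.filter_eq_self.2 (by simpa using hgt), List.nil_append]

theorem Fin.sum_perm_drop_ofFn_eq_sum_perm_take_ofFn {M : Type*} [AddCommMonoid M] {n : ℕ}
    (Φ : Fin n → List (Fin n) → M) (i : Fin n) :
    ∑ τ : Equiv.Perm (Fin n), Φ (τ i) ((List.ofFn τ).drop (i + 1)) =
      ∑ τ : Equiv.Perm (Fin n), Φ (τ i.rev) ((List.ofFn τ).take i.rev) := by
  have := i.neZero
  set ρ : Equiv.Perm (Fin n) := Equiv.addRight i.rev * Equiv.swap i 0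
  have hρi : ρ i = i.rev := by simp [ρ]
  have hρ : ∀ j, i < j → (ρ j : ℕ) = j - (i + 1) := by
    intro j hij
    have hj0 : j ≠ 0 := (Fin.zero_le i).trans_lt hij |>.ne'
    simp only [ρ, Equiv.Perm.mul_apply, Equiv.swap_apply_of_ne_of_ne hij.ne' hj0,
      Equiv.coe_addRight, Fin.val_add_eq_ite, Fin.val_rev]
    split_ifs <;> omega
  rw [← Equiv.sum_comp (Equiv.mulRight ρ)]
  refine Finset.sum_congr rfl fun τ _ => ?_
  simp only [Equiv.coe_mulRight, Equiv.Perm.mul_apply, hρi]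
  congr 1
  apply List.ext_getElem
  · simp
  · intro k hk _
    simp only [Equiv.Perm.coe_mul, List.length_drop, List.length_ofFn] at hk
    simp only [List.getElem_drop, List.getElem_ofFn, List.getElem_take, Equiv.Perm.mul_apply]
    congr 1
    ext
    rw [hρ _ (by simp only [Fin.lt_def]; omega)]
    simp

namespace MiniBatchGD

variable {p B : ℕ} (α : ℝ) (W : Fin B → Matrix (Fin p) (Fin p) ℝ)

theorem prodAfter_apply_self (τ : Equiv.Perm (Fin B)) (i : Fin B) :
    prodAfter α W τ (τ i) =
      (((List.ofFn τ).drop (i + 1)).map fun a => 1 - α • W a).reverse.prod := by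
  simp [prodAfter, List.filter_finRange_gt, List.ofFn_eq_map, List.map_reverse, List.map_drop,
    Function.comp_def]

theorem prodAll_eq (τ : Equiv.Perm (Fin B)) :
    prodAll α W τ = (List.ofFn fun j => 1 - α • W (τ j)).reverse.prod := by
  simp [prodAll, List.ofFn_eq_map, List.map_reverse]

theorem sum_prodAfter_mul_smul (τ : Equiv.Perm (Fin B)) :
    ∑ b, prodAfter α W τ b * (α • W b) = 1 - prodAll α W τ := by
  rw [← Equiv.sum_comp τ, prodAll_eq, ← sum_ofFn_drop_reverse_prod_mul_one_sub]
  refine Finset.sum_congr rfl fun i _ => ?_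
  rw [prodAfter_apply_self, List.map_drop, List.map_ofFn, sub_sub_cancel]
  rfl

theorem smul_sum_sum_prodAfter_mul :
    α • ∑ b, (∑ τ, prodAfter α W τ b) * W b = ∑ τ, (1 - prodAll α W τ) := by
  simp only [Finset.smul_sum, ← mul_smul_comm, Finset.sum_mul]
  rw [Finset.sum_comm]
  exact Finset.sum_congr rfl fun τ _ => sum_prodAfter_mul_smul α W τ

theorem smul_sum_mul_sum_prodAfter :
    α • ∑ b, W b * ∑ τ, prodAfter α W τ b = ∑ τ, (1 - prodAll α W τ) := by
  let Φ : Fin B → List (Fin B) → Matrix (Fin p) (Fin p) ℝ := fun a l =>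
    (α • W a) * (l.map fun a => 1 - α • W a).reverse.prod
  calc α • ∑ b, W b * ∑ τ, prodAfter α W τ b
      = ∑ τ : Equiv.Perm (Fin B), ∑ i, Φ (τ i) ((List.ofFn τ).drop (i + 1)) := by
        simp only [Finset.smul_sum, ← smul_mul_assoc, Finset.mul_sum]
        rw [Finset.sum_comm]
        refine Finset.sum_congr rfl fun τ _ => ?_
        rw [← Equiv.sum_comp τ]
        simp only [Φ, prodAfter_apply_self]
    _ = ∑ i : Fin B, ∑ τ : Equiv.Perm (Fin B), Φ (τ i) ((List.ofFn τ).drop (i + 1)) :=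
        Finset.sum_comm
    _ = ∑ i : Fin B, ∑ τ : Equiv.Perm (Fin B), Φ (τ i.rev) ((List.ofFn τ).take i.rev) := by
        simp only [Fin.sum_perm_drop_ofFn_eq_sum_perm_take_ofFn]
    _ = ∑ τ : Equiv.Perm (Fin B), ∑ i, Φ (τ i) ((List.ofFn τ).take i) := by
        rw [Finset.sum_comm]
        exact Finset.sum_congr rfl fun τ _ =>
          Equiv.sum_comp Fin.revPerm fun i => Φ (τ i) ((List.ofFn τ).take i)
    _ = ∑ τ, (1 - prodAll α W τ) := by
        refine Finset.sum_congr rfl fun τ _ => ?_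
        rw [prodAll_eq, ← sum_one_sub_mul_ofFn_take_reverse_prod]
        refine Finset.sum_congr rfl fun i _ => ?_
        simp only [Φ, List.map_take, List.map_ofFn, sub_sub_cancel]
        rfl

end MiniBatchGD

theorem commutation_identity_general {p B : ℕ} (α : ℝ)
    (W : Fin B → Matrix (Fin p) (Fin p) ℝ) :
    ∑ b : Fin B,
        (((B.factorial : ℝ))⁻¹ • ∑ τ : Equiv.Perm (Fin B), prodAfter α W τ b) * W b =
      ∑ b : Fin B,
        W b * (((B.factorial : ℝ))⁻¹ • ∑ τ : Equiv.Perm (Fin B), prodAfter α W τ b) := by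
  simp only [smul_mul_assoc, mul_smul_comm, ← Finset.smul_sum]
  congr 1
  rcases eq_or_ne α 0 with rfl | hα
  · simp [prodAfter, Nat.cast_comm]
  · exact smul_right_injective _ hα
      ((smul_sum_sum_prodAfter_mul α W).trans (smul_sum_mul_sum_prodAfter α W).symm)

/-- Commutation identity underlying the symmetry of `Z`. With
`Π_b := (1/B!)∑_{τ∈S_B} ∏_{j>τ⁻¹(b)}(I − αW_{τ(j)})` (factors ordered by decreasing position),
one has `∑_{b=1}^B Π_b W_b = ∑_{b=1}^B W_b Π_b`. -/
theorem commutation_identity {p B : ℕ} (hB : 1 ≤ B) (α : ℝ)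
    (W : Fin B → Matrix (Fin p) (Fin p) ℝ) :
    ∑ b : Fin B,
        (((B.factorial : ℝ))⁻¹ • ∑ τ : Equiv.Perm (Fin B), prodAfter α W τ b) * W b =
      ∑ b : Fin B,
        W b * (((B.factorial : ℝ))⁻¹ • ∑ τ : Equiv.Perm (Fin B), prodAfter α W τ b) :=
  commutation_identity_general α W
end
end

section
/- (Loewner shrinkage bounds for the two-batch cross-covariance.) Let W_1, W_2 ∈ ℝ^{p×p} be symmetric positive semidefinite matrices and α ≥ 0 with α‖W_1 + W_2‖ ≤ 2 (spectral norm). Set Z := (1/2)(W_1 + W_2) − (1/4)α(W_2W_1 + W_1W_2) and Δ := (1/4)[((1/2)αW_1 − I)W_2W_1 + ((1/2)αW_2 − I)W_1W_2]. Then in the Loewner order, −(1/2)‖W_1 + W_2‖·Z ⪯ Δ ⪯ (1/2)‖W_1 + W_2‖·Z; moreover the upper bound holds with equality when W_1 = W_2 = cI and α = 2/c for some c > 0. -/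
/-!
With `s := ‖W₁ + W₂‖` we have `W₁, W₂ ⪯ W₁ + W₂ ⪯ s • 1`, so `s • W - W * W ⪰ 0` for
`W ∈ {W₁, W₂, W₁ + W₂}` (as `W` commutes with `s • 1 - W`), and the congruences
`Wᵢ * Wⱼ * Wᵢ`, `Wᵢ * (s • 1 - Wⱼ) * Wᵢ` are positive semidefinite. Both `Δ + (s / 2) • Z` and
`(s / 2) • Z - Δ` are combinations of such matrices (and of `(W₁ ± W₂)²`) whose coefficients are
nonnegative exactly because `α ≥ 0` and `α s ≤ 2`. At `W₁ = W₂ = c • 1`, `α = 2 / c`, both `Δ`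
and `Z` vanish.
-/

open Matrix
open scoped Matrix.Norms.L2Operator MatrixOrder RealInnerProductSpace

namespace Matrix

variable {n : Type*} [Fintype n] [DecidableEq n]

theorem IsHermitian.le_l2_opNorm_smul_one {A : Matrix n n ℝ} (hA : A.IsHermitian) :
    A ≤ ‖A‖ • 1 := by
  rw [le_iff]
  refine .of_dotProduct_mulVec_nonneg ((isHermitian_one.smul (.all _)).sub hA) fun x => ?_
  set y : EuclideanSpace ℝ n := WithLp.toLp 2 x
  have hAy : ⟪y, toEuclideanCLM (𝕜 := ℝ) A y⟫ ≤ ‖A‖ * ⟪y, y⟫ := calc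
    _ ≤ ‖y‖ * ‖toEuclideanCLM (𝕜 := ℝ) A y‖ := real_inner_le_norm _ _
    _ ≤ ‖y‖ * (‖A‖ * ‖y‖) := by gcongr; exact l2_opNorm_mulVec A y
    _ = ‖A‖ * ⟪y, y⟫ := by rw [real_inner_self_eq_norm_sq]; ring
  rw [star_trivial, ← inner_toEuclideanCLM, map_sub, map_smul, map_one]
  simp only [_root_.sub_apply, _root_.smul_apply, _root_.one_apply_eq_self, inner_sub_right,
    real_inner_smul_right]
  linarith

variable {𝕜 : Type*} [RCLike 𝕜]

theorem mul_self_le_smul_self {A : Matrix n n 𝕜} {t : ℝ} (hA : 0 ≤ A) (ht : A ≤ t • 1) :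
    A * A ≤ t • A := by
  have hcomm : Commute A (t • 1 - A) := ((Commute.one_right A).smul_right t).sub_right (.refl A)
  have := hcomm.mul_nonneg hA (sub_nonneg.2 ht)
  rwa [mul_sub, mul_smul_comm, mul_one, sub_nonneg] at this

end Matrix

section TwoBatch

variable {R : Type*} [Ring R] [Algebra ℝ R]

noncomputable def twoBatchZ (α : ℝ) (W₁ W₂ : R) : R :=
  (1 / 2 : ℝ) • (W₁ + W₂) - ((1 / 4 : ℝ) * α) • (W₂ * W₁ + W₁ * W₂)

noncomputable def twoBatchDelta (α : ℝ) (W₁ W₂ : R) : R :=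
  (1 / 4 : ℝ) • (((α / 2) • W₁ - 1) * (W₂ * W₁) + ((α / 2) • W₂ - 1) * (W₁ * W₂))

theorem twoBatchDelta_add_smul_twoBatchZ (α s : ℝ) (W₁ W₂ : R) :
    twoBatchDelta α W₁ W₂ + ((1 / 2 : ℝ) * s) • twoBatchZ α W₁ W₂ =
      (α / 8) • (W₁ * W₂ * W₁ + W₂ * W₁ * W₂) +
      ((s * α + 2) / 16) • (s • (W₁ + W₂) - (W₁ + W₂) * (W₁ + W₂)) +
      (s * (2 - s * α) / 16) • (W₁ + W₂) + ((s * α + 2) / 16) • ((W₁ - W₂) * (W₁ - W₂)) := by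
  simp only [twoBatchDelta, twoBatchZ, mul_sub, sub_mul, mul_add, add_mul, smul_mul_assoc,
    one_mul, smul_sub, smul_add, smul_smul, mul_assoc]
  module

theorem smul_twoBatchZ_sub_twoBatchDelta (α s : ℝ) (W₁ W₂ : R) :
    ((1 / 2 : ℝ) * s) • twoBatchZ α W₁ W₂ - twoBatchDelta α W₁ W₂ =
      ((2 - s * α) / 8) • ((W₁ + W₂) * (W₁ + W₂)) +
      (α / 8) • (W₁ * (s • 1 - W₂) * W₁ + W₂ * (s • 1 - W₁) * W₂) +
      (1 / 4 : ℝ) • ((s • W₁ - W₁ * W₁) + (s • W₂ - W₂ * W₂)) := by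
  simp only [twoBatchDelta, twoBatchZ, mul_sub, sub_mul, mul_add, add_mul, smul_mul_assoc,
    mul_smul_comm, one_mul, mul_one, smul_sub, smul_add, smul_smul, mul_assoc]
  module

theorem twoBatchDelta_smul_one {c : ℝ} (hc : c ≠ 0) :
    twoBatchDelta (2 / c) (c • 1 : R) (c • 1) = 0 := by
  have hhalf : (2 / c / 2) • (c • 1 : R) = 1 := by rw [smul_smul]; field_simp; simp
  simp [twoBatchDelta, hhalf]

theorem twoBatchZ_smul_one (c : ℝ) :
    twoBatchZ (2 / c) (c • 1 : R) (c • 1) = 0 := by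
  simp only [twoBatchZ, smul_mul_smul_comm, one_mul, ← add_smul, smul_smul, ← sub_smul]
  convert zero_smul ℝ (1 : R)
  field_simp
  ring

end TwoBatch

section LoewnerBounds

variable {n : Type*} [Fintype n] [DecidableEq n] {W₁ W₂ : Matrix n n ℝ} {α s : ℝ}

theorem twoBatchDelta_add_smul_twoBatchZ_nonneg (h₁ : 0 ≤ W₁) (h₂ : 0 ≤ W₂) (hα : 0 ≤ α)
    (hs : 0 ≤ s) (hαs : α * s ≤ 2) (hsum : W₁ + W₂ ≤ s • 1) :
    0 ≤ twoBatchDelta α W₁ W₂ + ((1 / 2 : ℝ) * s) • twoBatchZ α W₁ W₂ := by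
  have hS : 0 ≤ W₁ + W₂ := add_nonneg h₁ h₂
  have hsq : 0 ≤ s • (W₁ + W₂) - (W₁ + W₂) * (W₁ + W₂) :=
    sub_nonneg.2 (mul_self_le_smul_self hS hsum)
  have hdiff : 0 ≤ (W₁ - W₂) * (W₁ - W₂) := (h₁.isSelfAdjoint.sub h₂.isSelfAdjoint).mul_self_nonneg
  have hcross : 0 ≤ W₁ * W₂ * W₁ + W₂ * W₁ * W₂ :=
    add_nonneg (IsSelfAdjoint.conjugate_nonneg h₂ h₁.isSelfAdjoint)
      (IsSelfAdjoint.conjugate_nonneg h₁ h₂.isSelfAdjoint)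
  rw [twoBatchDelta_add_smul_twoBatchZ]
  have hc : 0 ≤ (s * α + 2) / 16 := by positivity
  have hc' : 0 ≤ s * (2 - s * α) / 16 := by nlinarith
  exact add_nonneg (add_nonneg (add_nonneg (smul_nonneg (by positivity) hcross)
    (smul_nonneg hc hsq)) (smul_nonneg hc' hS)) (smul_nonneg hc hdiff)

theorem twoBatchDelta_le_smul_twoBatchZ (h₁ : 0 ≤ W₁) (h₂ : 0 ≤ W₂) (hα : 0 ≤ α)
    (hαs : α * s ≤ 2) (hsum : W₁ + W₂ ≤ s • 1) :
    twoBatchDelta α W₁ W₂ ≤ ((1 / 2 : ℝ) * s) • twoBatchZ α W₁ W₂ := by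
  have hW₁s : W₁ ≤ s • 1 := (le_add_of_nonneg_right h₂).trans hsum
  have hW₂s : W₂ ≤ s • 1 := (le_add_of_nonneg_left h₁).trans hsum
  have hsq : 0 ≤ (W₁ + W₂) * (W₁ + W₂) := (h₁.isSelfAdjoint.add h₂.isSelfAdjoint).mul_self_nonneg
  have hcross : 0 ≤ W₁ * (s • 1 - W₂) * W₁ + W₂ * (s • 1 - W₁) * W₂ :=
    add_nonneg (IsSelfAdjoint.conjugate_nonneg (sub_nonneg.2 hW₂s) h₁.isSelfAdjoint)
      (IsSelfAdjoint.conjugate_nonneg (sub_nonneg.2 hW₁s) h₂.isSelfAdjoint)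
  have hself : 0 ≤ (s • W₁ - W₁ * W₁) + (s • W₂ - W₂ * W₂) :=
    add_nonneg (sub_nonneg.2 (mul_self_le_smul_self h₁ hW₁s))
      (sub_nonneg.2 (mul_self_le_smul_self h₂ hW₂s))
  rw [← sub_nonneg, smul_twoBatchZ_sub_twoBatchDelta]
  have hc : 0 ≤ (2 - s * α) / 8 := by linarith
  exact add_nonneg (add_nonneg (smul_nonneg hc hsq) (smul_nonneg (by positivity) hcross))
    (smul_nonneg (by norm_num) hself)

end LoewnerBounds

/-- Loewner shrinkage bounds for the two-batch cross-covariance, from the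
proof of Proposition `twobatch_generr_Zonly`. Let `W₁, W₂ ∈ ℝ^{p×p}` be symmetric positive
semidefinite and `α ≥ 0` with `α‖W₁ + W₂‖ ≤ 2` (spectral norm). Set
`Z := (1/2)(W₁ + W₂) − (1/4)α(W₂W₁ + W₁W₂)` and
`Δ := (1/4)[((1/2)αW₁ − I)W₂W₁ + ((1/2)αW₂ − I)W₁W₂]`. Then in the Loewner order,
`−(1/2)‖W₁ + W₂‖·Z ⪯ Δ ⪯ (1/2)‖W₁ + W₂‖·Z`; moreover the upper bound holds with equality
when `W₁ = W₂ = cI` and `α = 2/c` for some `c > 0`. -/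
theorem twobatch_loewner_shrinkage {p : ℕ}
    (W₁ W₂ : Matrix (Fin p) (Fin p) ℝ)
    (hW₁ : W₁.PosSemidef) (hW₂ : W₂.PosSemidef)
    (α : ℝ) (hα : 0 ≤ α) (hstep : α * ‖W₁ + W₂‖ ≤ 2)
    (Z : Matrix (Fin p) (Fin p) ℝ)
    (hZ : Z = (1 / 2 : ℝ) • (W₁ + W₂) - ((1 / 4 : ℝ) * α) • (W₂ * W₁ + W₁ * W₂))
    (Δ : Matrix (Fin p) (Fin p) ℝ)
    (hΔ : Δ = (1 / 4 : ℝ) •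
      (((α / 2) • W₁ - 1) * (W₂ * W₁) + ((α / 2) • W₂ - 1) * (W₁ * W₂))) :
    (Δ + ((1 / 2 : ℝ) * ‖W₁ + W₂‖) • Z).PosSemidef ∧
    (((1 / 2 : ℝ) * ‖W₁ + W₂‖) • Z - Δ).PosSemidef ∧
    (∀ c : ℝ, 0 < c → W₁ = c • (1 : Matrix (Fin p) (Fin p) ℝ) →
      W₂ = c • (1 : Matrix (Fin p) (Fin p) ℝ) → α = 2 / c →
        Δ = ((1 / 2 : ℝ) * ‖W₁ + W₂‖) • Z) := by
  obtain rfl : Z = twoBatchZ α W₁ W₂ := hZ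
  obtain rfl : Δ = twoBatchDelta α W₁ W₂ := hΔ
  have hsum : W₁ + W₂ ≤ ‖W₁ + W₂‖ • 1 :=
    (hW₁.isHermitian.add hW₂.isHermitian).le_l2_opNorm_smul_one
  rw [← nonneg_iff_posSemidef] at hW₁ hW₂
  refine ⟨nonneg_iff_posSemidef.1 <|
      twoBatchDelta_add_smul_twoBatchZ_nonneg hW₁ hW₂ hα (norm_nonneg _) hstep hsum,
    le_iff.1 <| twoBatchDelta_le_smul_twoBatchZ hW₁ hW₂ hα hstep hsum, ?_⟩
  rintro c hc rfl rfl rfl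
  rw [twoBatchDelta_smul_one hc.ne', twoBatchZ_smul_one, smul_zero]
end
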